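/- (1) An m-monoid is extensional if and only if it is isomorphic to a canonical m-monoid. (2) Every finitely ranked m-monoid is extensional. -/

import Mathlib

universe u

open scoped Classical

/-- A finite permutation of ω: an element of S_ω, i.e. a permutation moving
only finitely many points. -/
def FinPerm (σ : Equiv.Perm ℕ) : Prop := {n : ℕ | σ n ≠ n}.Finite

/-- The raw operations of a merge algebra: the binary merges `⋆_n` and the
actions `σ̄` of (finite) permutations. -/
structure MergeOps (A : Type u) where
  star : ℕ → A → A → A
  bar : Equiv.Perm ℕ → A → A

namespace MergeOps

variable {A : Type u}

/-- `chain g k = ((g 0 ⋆_1 g 1) ⋆_2 g 2) … ⋆_k (g k)`. -/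
def chain (M : MergeOps A) (g : ℕ → A) : ℕ → A
  | 0 => g 0
  | i + 1 => M.star (i + 1) (M.chain g i) (g (i + 1))

/-- `chainStar g k y = ((…(g 0 ⋆_1 g 1) ⋆_2 …) ⋆_{k-1} g (k-1)) ⋆_k y`. -/
def chainStar (M : MergeOps A) (g : ℕ → A) (k : ℕ) (y : A) : A :=
  match k with
  | 0 => y
  | k + 1 => M.star (k + 1) (M.chain g k) y

/-- The `n`-coordinate of `x` relative to the coordinator `pt`:
`x[n] = τ̄^n_0(x) ⋆_1 pt`. -/
def coord (M : MergeOps A) (pt x : A) (n : ℕ) : A :=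
  M.star 1 (M.bar (Equiv.swap 0 n) x) pt

end MergeOps

/-- A merge algebra: operations `⋆_n` and `σ̄` satisfying axioms (B1)–(B7). -/
structure MergeAlgebra (A : Type u) extends MergeOps A where
  /-- (B1) each `⋆_n` is associative -/
  star_assoc : ∀ (n : ℕ) (x y z : A), star n (star n x y) z = star n x (star n y z)
  /-- (B1) each `⋆_n` is idempotent -/
  star_idem : ∀ (n : ℕ) (x : A), star n x x = x
  /-- (B2) -/
  star_zero : ∀ x y : A, star 0 x y = y
  /-- (B3), first part (k ≥ n) -/
  B3a : ∀ {n k : ℕ}, n ≤ k → ∀ x y z : A, star n (star k x y) z = star n x z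
  /-- (B3), second part (k ≥ n) -/
  B3b : ∀ {n k : ℕ}, n ≤ k → ∀ x y z : A, star k x (star n y z) = star k x z
  /-- (B4) (k < n) -/
  B4 : ∀ {n k : ℕ}, k < n → ∀ x y z : A, star n (star k x y) z = star k x (star n y z)
  /-- (B5) `σ̄(τ̄(x)) = (τ∘σ)‾(x)` -/
  B5 : ∀ σ τ : Equiv.Perm ℕ, FinPerm σ → FinPerm τ → ∀ x : A,
      bar σ (bar τ x) = bar (τ * σ) x
  /-- (B5) `ῑ(x) = x` -/
  bar_id : ∀ x : A, bar 1 x = x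
  /-- (B6): for `n ≤ k` and `σ` a permutation of `k`, with `f i = x` iff `σ i < n`:
  `σ̄(x ⋆_n y) = ((…(σ̄(f 0) ⋆_1 σ̄(f 1)) ⋆_2 …) ⋆_{k-1} σ̄(f (k-1))) ⋆_k y`. -/
  B6 : ∀ {n k : ℕ}, n ≤ k → ∀ σ : Equiv.Perm ℕ, (∀ i, k ≤ i → σ i = i) →
      ∀ x y : A, bar σ (star n x y) =
        toMergeOps.chainStar (fun i => bar σ (if σ i < n then x else y)) k y
  /-- (B7) -/
  B7 : ∀ {m n : ℕ} (σ τ : Equiv.Perm ℕ), FinPerm σ → FinPerm τ →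
      (∀ i, m ≤ i → i < n → σ i = τ i) →
      ∀ x y z : A, star n (star m z (bar σ x)) y = star n (star m z (bar τ x)) y

/-- An m-monoid: a monoid structure together with a merge algebra structure on
the same carrier, satisfying right distributivity (L1). -/
structure MMonoid (A : Type u) extends MergeAlgebra A where
  mul : A → A → A
  one : A
  mul_assoc : ∀ x y z : A, mul (mul x y) z = mul x (mul y z)
  one_mul : ∀ x : A, mul one x = x
  mul_one : ∀ x : A, mul x one = x
  /-- (L1) right distributivity -/
  L1 : ∀ (n : ℕ) (x y z : A), mul (star n x y) z = star n (mul x z) (mul y z)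

namespace MMonoid

variable {A : Type u} (M : MMonoid A)

/-- A cm-monoid is an m-monoid satisfying (L2): `σ̄(x)·y = σ̄(x·y)`. -/
def IsCM : Prop :=
  ∀ σ : Equiv.Perm ℕ, FinPerm σ → ∀ x y : A, M.mul (M.bar σ x) y = M.bar σ (M.mul x y)

/-- An am-monoid is an m-monoid satisfying (L3): `σ̄(x·y) = σ̄(x)·σ̄(y)`. -/
def IsAM : Prop :=
  ∀ σ : Equiv.Perm ℕ, FinPerm σ → ∀ x y : A, M.bar σ (M.mul x y) = M.mul (M.bar σ x) (M.bar σ y)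

/-- The `n`-coordinate `x[n] = τ̄^n_0(x) ⋆_1 1` (the coordinator is the unit). -/
def coord (x : A) (n : ℕ) : A := M.toMergeOps.coord M.one x n

/-- Extensionality: elements with the same coordinates are equal. -/
def Extensional : Prop := ∀ x y : A, (∀ n : ℕ, M.coord x n = M.coord y n) → x = y

/-- An element has rank ≤ n iff `x ⋆_n 1 = x`; the m-monoid is finitely ranked
if every element has finite rank. -/
def FinitelyRanked : Prop := ∀ x : A, ∃ n : ℕ, M.star n x M.one = x

/-- A degenerate m-monoid. -/
def Degenerate : Prop :=
  (∀ σ : Equiv.Perm ℕ, FinPerm σ → ∀ x : A, M.bar σ x = x) ∧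
    (∀ (n : ℕ) (x y : A), M.star n x y = y)

/-- `a` is finite dimensional: for every `n` there is `m` with
`(a·(1 ⋆_m b ⋆_{m+k} 1)) ⋆_n a = a` for all `b` and `k`. -/
def FinDimEl (a : A) : Prop :=
  ∀ n : ℕ, ∃ m : ℕ, ∀ (b : A) (k : ℕ),
    M.star n (M.mul a (M.star (m + k) (M.star m M.one b) M.one)) a = a

/-- `a` is ω-finite dimensional: for every `n` there is `m` with
`(a·(1 ⋆_m b)) ⋆_n a = a` for all `b`. -/
def OmegaFinDimEl (a : A) : Prop :=
  ∀ n : ℕ, ∃ m : ℕ, ∀ b : A,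
    M.star n (M.mul a (M.star m M.one b)) a = a

/-- An m-monoid is finite dimensional if every element is. -/
def FinDim : Prop := ∀ a : A, M.FinDimEl a

/-- An m-monoid is ω-finite dimensional if every element is. -/
def OmegaFinDim : Prop := ∀ a : A, M.OmegaFinDimEl a

end MMonoid

/-- An isomorphism of m-monoids: a bijection preserving the merges, the actions
of finite permutations, the multiplication and the unit. -/
structure MMonoidIso {A B : Type u} (M : MMonoid A) (N : MMonoid B) where
  toEquiv : A ≃ B
  map_star : ∀ (n : ℕ) (x y : A), toEquiv (M.star n x y) = N.star n (toEquiv x) (toEquiv y)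
  map_bar : ∀ σ : Equiv.Perm ℕ, FinPerm σ → ∀ x : A, toEquiv (M.bar σ x) = N.bar σ (toEquiv x)
  map_mul : ∀ x y : A, toEquiv (M.mul x y) = N.mul (toEquiv x) (toEquiv y)
  map_one : toEquiv M.one = N.one


/-!
Merges and finite permutations act on coordinates as they act on sequences:
`(x ⋆_n y)[i]` is `x[i]` for `i < n` and `y[i]` otherwise (B6), and `(σ̄ x)[i] = x[σ i]` (B7).
So in an extensional m-monoid the coordinate map `x ↦ (x[n])ₙ` embeds the merge algebra
into `Seq(M)`, and transferring the whole m-monoid along it onto its image yields an isomorphic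
canonical m-monoid. Conversely the `0`-th entry of `s[k]` in a canonical m-monoid is `s k`, and
isomorphisms preserve coordinates.

For ranks, (B6) gives `x ⋆_{k+1} 1 = (x ⋆_k τ̄^k_0(x[k])) ⋆_{k+1} 1`, so by induction on `k`
the truncation `x ⋆_k 1` depends only on the coordinates of `x`; an element of finite rank is
one of its truncations.
-/

lemma FinPerm.mul {σ τ : Equiv.Perm ℕ} (hσ : FinPerm σ) (hτ : FinPerm τ) :
    FinPerm (σ * τ) := by
  refine (hσ.union hτ).subset fun n hn => ?_
  by_contra h
  simp only [Set.mem_union, Set.mem_ofPred, not_or, not_not] at h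
  exact hn (by simp [h.1, h.2])

lemma finPerm_swap (a b : ℕ) : FinPerm (Equiv.swap a b) :=
  ((Set.finite_singleton b).insert a).subset fun n hn => by
    by_contra h
    simp only [Set.mem_insert_iff, Set.mem_singleton_iff, not_or] at h
    exact hn (Equiv.swap_apply_of_ne_of_ne h.1 h.2)

namespace MergeAlgebra

variable {A : Type u} (M : MergeAlgebra A)

lemma star_one_chain (g : ℕ → A) (m : ℕ) (z : A) :
    M.star 1 (M.chain g m) z = M.star 1 (g 0) z := by
  induction m with
  | zero => rfl
  | succ m ih => rw [MergeOps.chain, M.B3a (by omega), ih]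

lemma chain_eq_star_of_forall_lt {g : ℕ → A} {w : A} {k : ℕ} (h : ∀ i < k, g i = w) :
    M.chain g k = M.star k w (g k) := by
  induction k with
  | zero => exact (M.star_zero w _).symm
  | succ k ih =>
    rw [MergeOps.chain, ih fun i hi => h i (by omega), h k (by omega), M.star_idem]

lemma bar_swap_bar_swap (k : ℕ) (x : A) :
    M.bar (Equiv.swap 0 k) (M.bar (Equiv.swap 0 k) x) = x := by
  rw [M.B5 _ _ (finPerm_swap 0 k) (finPerm_swap 0 k), Equiv.swap_mul_self, M.bar_id]

lemma coord_star (pt : A) (n i : ℕ) (x y : A) :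
    M.coord pt (M.star n x y) i = if i < n then M.coord pt x i else M.coord pt y i := by
  obtain ⟨K, hK⟩ : ∃ K, max n (i + 1) = K + 1 := ⟨max n (i + 1) - 1, by omega⟩
  have hfix : ∀ j, K + 1 ≤ j → Equiv.swap 0 i j = j := fun j hj =>
    Equiv.swap_apply_of_ne_of_ne (by omega) (by omega)
  rw [MergeOps.coord, M.B6 (by omega) _ hfix, MergeOps.chainStar, M.B3a (by omega),
    star_one_chain, Equiv.swap_apply_left]
  split_ifs <;> rfl

lemma coord_bar (pt : A) {σ : Equiv.Perm ℕ} (hσ : FinPerm σ) (x : A) (i : ℕ) :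
    M.coord pt (M.bar σ x) i = M.coord pt x (σ i) := by
  have h := M.B7 (m := 0) (n := 1) (σ * Equiv.swap 0 i) (Equiv.swap 0 (σ i))
    (hσ.mul (finPerm_swap 0 i)) (finPerm_swap 0 (σ i))
    (fun j _ hj => by simp [show j = 0 by omega]) x pt pt
  rwa [M.star_zero, M.star_zero, ← M.B5 _ _ (finPerm_swap 0 i) hσ] at h

lemma bar_swap_coord (pt : A) (k : ℕ) (x : A) :
    M.bar (Equiv.swap 0 k) (M.coord pt x k) =
      M.star (k + 1) (M.star k (M.bar (Equiv.swap 0 k) pt) x) pt := by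
  have hfix : ∀ j, k + 1 ≤ j → Equiv.swap 0 k j = j := fun j hj =>
    Equiv.swap_apply_of_ne_of_ne (by omega) (by omega)
  rw [MergeOps.coord, M.B6 le_add_self _ hfix, MergeOps.chainStar,
    M.chain_eq_star_of_forall_lt (w := M.bar (Equiv.swap 0 k) pt) fun i hi => ?_]
  · rw [Equiv.swap_apply_right, if_pos one_pos, bar_swap_bar_swap]
  · rw [if_neg (by rw [Equiv.swap_apply_def]; split_ifs <;> omega)]

lemma star_succ_eq (pt : A) (k : ℕ) (x : A) :
    M.star (k + 1) x pt =
      M.star (k + 1) (M.star k x (M.bar (Equiv.swap 0 k) (M.coord pt x k))) pt := by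
  set w := M.bar (Equiv.swap 0 k) pt
  calc M.star (k + 1) x pt
      = M.star (k + 1) (M.star (k + 1) (M.star k x x) pt) pt := by
        rw [M.star_idem, M.star_assoc, M.star_idem]
    _ = M.star (k + 1) (M.star k x (M.star k w (M.star (k + 1) x pt))) pt := by
        rw [M.B4 (Nat.lt_succ_self k), ← M.star_assoc k x w, M.B3a le_rfl]
    _ = _ := by rw [bar_swap_coord, M.B4 (Nat.lt_succ_self k) w x pt]

lemma star_eq_star_of_coord_eq (pt : A) {x y : A}
    (h : ∀ n, M.coord pt x n = M.coord pt y n) (k : ℕ) :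
    M.star k x pt = M.star k y pt := by
  induction k with
  | zero => rw [M.star_zero, M.star_zero]
  | succ k ih =>
    rw [M.star_succ_eq pt k x, M.star_succ_eq pt k y, h k, ← M.B3a le_rfl x pt, ih,
      M.B3a le_rfl]

lemma star_eq_self_of_le (pt : A) {n N : ℕ} (hn : n ≤ N) {x : A}
    (h : M.star n x pt = x) : M.star N x pt = x := by
  rw [← h]
  rcases hn.eq_or_lt with rfl | hlt
  · rw [M.star_assoc, M.star_idem]
  · rw [M.B4 hlt, M.star_idem]

lemma eq_of_coord_eq (pt : A) {x y : A} {n m : ℕ} (hx : M.star n x pt = x)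
    (hy : M.star m y pt = y) (h : ∀ i, M.coord pt x i = M.coord pt y i) : x = y := by
  rw [← M.star_eq_self_of_le pt (le_max_left n m) hx,
    ← M.star_eq_self_of_le pt (le_max_right n m) hy, M.star_eq_star_of_coord_eq pt h]

end MergeAlgebra

namespace MergeOps

variable {A B : Type u}

def transfer (O : MergeOps A) (e : A ≃ B) : MergeOps B where
  star n x y := e (O.star n (e.symm x) (e.symm y))
  bar σ x := e (O.bar σ (e.symm x))

@[simp] lemma transfer_star (O : MergeOps A) (e : A ≃ B) (n : ℕ) (x y : B) :
    (O.transfer e).star n x y = e (O.star n (e.symm x) (e.symm y)) := rfl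

@[simp] lemma transfer_bar (O : MergeOps A) (e : A ≃ B) (σ : Equiv.Perm ℕ) (x : B) :
    (O.transfer e).bar σ x = e (O.bar σ (e.symm x)) := rfl

lemma transfer_chain (O : MergeOps A) (e : A ≃ B) (g : ℕ → B) (k : ℕ) :
    (O.transfer e).chain g k = e (O.chain (e.symm ∘ g) k) := by
  induction k with
  | zero => simp [chain]
  | succ k ih => simp [chain, ih]

lemma transfer_chainStar (O : MergeOps A) (e : A ≃ B) (g : ℕ → B) (k : ℕ) (y : B) :
    (O.transfer e).chainStar g k y = e (O.chainStar (e.symm ∘ g) k (e.symm y)) := by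
  cases k with
  | zero => simp [chainStar]
  | succ k => simp [chainStar, transfer_chain]

end MergeOps

def MergeAlgebra.transfer {A B : Type u} (M : MergeAlgebra A) (e : A ≃ B) :
    MergeAlgebra B where
  toMergeOps := M.toMergeOps.transfer e
  star_assoc n x y z := by simp [M.star_assoc]
  star_idem n x := by simp [M.star_idem]
  star_zero x y := by simp [M.star_zero]
  B3a h x y z := by simp [M.B3a h]
  B3b h x y z := by simp [M.B3b h]
  B4 h x y z := by simp [M.B4 h]
  B5 σ τ hσ hτ x := by simp [M.B5 σ τ hσ hτ]
  bar_id x := by simp [M.bar_id]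
  B6 hnk σ hfix x y := by
    rw [MergeOps.transfer_chainStar]
    simp [M.B6 hnk σ hfix, Function.comp_def, apply_ite e.symm]
  B7 σ τ hσ hτ hστ x y z := by simp [M.B7 σ τ hσ hτ hστ]

def MMonoid.transfer {A B : Type u} (M : MMonoid A) (e : A ≃ B) : MMonoid B where
  toMergeAlgebra := M.toMergeAlgebra.transfer e
  mul x y := e (M.mul (e.symm x) (e.symm y))
  one := e M.one
  mul_assoc x y z := by simp [M.mul_assoc]
  one_mul x := by simp [M.one_mul]
  mul_one x := by simp [M.mul_one]
  L1 n x y z := by simp [MergeAlgebra.transfer, M.L1]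

def MMonoidIso.transfer {A B : Type u} (M : MMonoid A) (e : A ≃ B) :
    MMonoidIso M (M.transfer e) where
  toEquiv := e
  map_star n x y := by simp [MMonoid.transfer, MergeAlgebra.transfer]
  map_bar σ _ x := by simp [MMonoid.transfer, MergeAlgebra.transfer]
  map_mul x y := by simp [MMonoid.transfer]
  map_one := rfl

lemma MMonoidIso.map_coord {A B : Type u} {M : MMonoid A} {N : MMonoid B} (φ : MMonoidIso M N)
    (x : A) (k : ℕ) : φ.toEquiv (M.coord x k) = N.coord (φ.toEquiv x) k := by
  rw [MMonoid.coord, MergeOps.coord, φ.map_star, φ.map_bar _ (finPerm_swap 0 k), φ.map_one]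
  rfl

namespace MMonoid

variable {A B : Type u}

lemma coord_star (M : MMonoid A) (n i : ℕ) (x y : A) :
    M.coord (M.star n x y) i = if i < n then M.coord x i else M.coord y i :=
  M.toMergeAlgebra.coord_star M.one n i x y

lemma coord_bar (M : MMonoid A) {σ : Equiv.Perm ℕ} (hσ : FinPerm σ) (x : A) (i : ℕ) :
    M.coord (M.bar σ x) i = M.coord x (σ i) :=
  M.toMergeAlgebra.coord_bar M.one hσ x i

lemma FinitelyRanked.extensional {M : MMonoid A} (hM : M.FinitelyRanked) : M.Extensional :=
  fun x y h => by
    obtain ⟨n, hx⟩ := hM x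
    obtain ⟨m, hy⟩ := hM y
    exact M.toMergeAlgebra.eq_of_coord_eq M.one hx hy h

lemma Extensional.injective_coord {M : MMonoid A} (hM : M.Extensional) :
    Function.Injective M.coord :=
  fun x y h => hM x y (congrFun h)

lemma Extensional.of_iso {M : MMonoid A} {N : MMonoid B} (φ : MMonoidIso M N)
    (hN : N.Extensional) : M.Extensional := by
  refine fun x y h => φ.toEquiv.injective (hN _ _ fun k => ?_)
  rw [← φ.map_coord, ← φ.map_coord, h k]

structure IsCanonical {X : Set (ℕ → B)} (N : MMonoid X) : Prop where
  coe_star : ∀ (n : ℕ) (s u : X),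
    ((N.star n s u : X) : ℕ → B) =
      fun i => if i < n then (s : ℕ → B) i else (u : ℕ → B) i
  coe_bar : ∀ σ : Equiv.Perm ℕ, FinPerm σ → ∀ s : X,
    ((N.bar σ s : X) : ℕ → B) = fun i => (s : ℕ → B) (σ i)

lemma IsCanonical.coord_apply_zero {X : Set (ℕ → B)} {N : MMonoid X} (hN : N.IsCanonical)
    (s : X) (k : ℕ) : (N.coord s k : ℕ → B) 0 = (s : ℕ → B) k := by
  rw [coord, MergeOps.coord, hN.coe_star, hN.coe_bar _ (finPerm_swap 0 k)]
  simp

lemma IsCanonical.extensional {X : Set (ℕ → B)} {N : MMonoid X} (hN : N.IsCanonical) :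
    N.Extensional := by
  refine fun s u h => Subtype.ext (funext fun k => ?_)
  rw [← hN.coord_apply_zero s k, ← hN.coord_apply_zero u k, h k]

lemma isCanonical_transfer_coord (M : MMonoid A) (hM : Function.Injective M.coord) :
    (M.transfer (Equiv.ofInjective M.coord hM)).IsCanonical := by
  have coe_symm (s : Set.range M.coord) (i : ℕ) :
      M.coord ((Equiv.ofInjective M.coord hM).symm s) i = (s : ℕ → A) i :=
    congrFun (Equiv.apply_ofInjective_symm hM s) i
  constructor
  · intro n s u
    ext i
    simp [transfer, MergeAlgebra.transfer, coord_star, coe_symm]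
  · intro σ hσ s
    ext i
    simp [transfer, MergeAlgebra.transfer, coord_bar _ hσ, coe_symm]

end MMonoid

/-- STATEMENT 6: (1) an m-monoid is extensional iff it is isomorphic to a
canonical m-monoid (an m-monoid whose carrier is a merge subalgebra of some
`Seq(B)`, with the sequence merge operations); (2) every finitely ranked
m-monoid is extensional. -/
theorem extensional_iff_canonical {A : Type u} (M : MMonoid A) :
    (M.Extensional ↔
      ∃ (B : Type u) (X : Set (ℕ → B)) (N : MMonoid X),
        (∀ (n : ℕ) (s u : X),
          ((N.star n s u : X) : ℕ → B) = fun i => if i < n then (s : ℕ → B) i else (u : ℕ → B) i) ∧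
        (∀ σ : Equiv.Perm ℕ, FinPerm σ → ∀ s : X,
          ((N.bar σ s : X) : ℕ → B) = fun i => (s : ℕ → B) (σ i)) ∧
        Nonempty (MMonoidIso M N)) ∧
    (M.FinitelyRanked → M.Extensional) := by
  refine ⟨⟨fun hM => ?_, ?_⟩, MMonoid.FinitelyRanked.extensional⟩
  · have hN := M.isCanonical_transfer_coord hM.injective_coord
    exact ⟨A, _, _, hN.coe_star, hN.coe_bar, ⟨MMonoidIso.transfer M _⟩⟩
  · rintro ⟨B, X, N, hstar, hbar, ⟨φ⟩⟩
    exact (MMonoid.IsCanonical.extensional ⟨hstar, hbar⟩).of_iso φ
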